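/- For all extended-real failure times A, B, C: A ⊴ (B ⊴ C) = (A ◁ B) + (A·B·(C ◁ B)) + ((A Δ B)·(B ⊴ C)). -/

import Mathlib

noncomputable def dAND (A B : EReal) : EReal := max A B
noncomputable def dOR (A B : EReal) : EReal := min A B
noncomputable def dBEFORE (A B : EReal) : EReal := if A < B then A else ⊤
noncomputable def dIBEFORE (A B : EReal) : EReal := if A ≤ B then A else ⊤
noncomputable def dSIMULT (A B : EReal) : EReal := if A = B then A else ⊤
noncomputable def NEVER : EReal := ⊤

/-! `A ◁ B` and `A ⊴ B` are `A` or `⊤`, so each side reduces to `A` or `⊤` in every order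
configuration of `A`, `B` (and `C` against `B`): `A ⊴ (B ⊴ C)` fails at `A` exactly when
`A ≤ B` or `B ⊴ C` never fails, i.e. `C < B`. On the right, `A ◁ B` covers `A < B`,
`A · B · (C ◁ B)` covers `C < B ≤ A`, and `(A Δ B) · (B ⊴ C)` covers `A = B ≤ C`. -/

section

variable {A B : EReal}

theorem dBEFORE_of_lt (h : A < B) : dBEFORE A B = A := if_pos h

theorem dBEFORE_of_le (h : B ≤ A) : dBEFORE A B = ⊤ := if_neg h.not_gt

theorem dIBEFORE_of_le (h : A ≤ B) : dIBEFORE A B = A := if_pos h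

theorem dIBEFORE_of_lt (h : B < A) : dIBEFORE A B = ⊤ := if_neg h.not_ge

theorem dSIMULT_self (A : EReal) : dSIMULT A A = A := if_pos rfl

theorem dSIMULT_of_ne (h : A ≠ B) : dSIMULT A B = ⊤ := if_neg h

end

theorem dIBEFORE_dIBEFORE (A B C : EReal) :
    dIBEFORE A (dIBEFORE B C) = if A ≤ B ∨ C < B then A else ⊤ := by
  rcases le_or_gt B C with hBC | hCB
  · rw [dIBEFORE_of_le hBC]
    simp [hBC.not_gt, dIBEFORE]
  · simp [dIBEFORE_of_lt hCB, hCB, dIBEFORE_of_le le_top]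

theorem ibefore_ibefore (A B C : EReal) :
    dIBEFORE A (dIBEFORE B C) =
      dOR (dOR (dBEFORE A B) (dAND (dAND A B) (dBEFORE C B)))
        (dAND (dSIMULT A B) (dIBEFORE B C)) := by
  rw [dIBEFORE_dIBEFORE]
  simp only [dOR, dAND]
  rcases lt_trichotomy A B with hAB | rfl | hBA
  · simp [dBEFORE_of_lt hAB, dSIMULT_of_ne hAB.ne, hAB.le]
  · rw [dBEFORE_of_le le_rfl, dSIMULT_self]
    rcases le_or_gt A C with hAC | hCA
    · simp [dBEFORE_of_le hAC, dIBEFORE_of_le hAC]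
    · simp [dBEFORE_of_lt hCA, dIBEFORE_of_lt hCA, hCA.le]
  · rcases le_or_gt B C with hBC | hCB
    · simp [dBEFORE_of_le hBA.le, dBEFORE_of_le hBC, dSIMULT_of_ne hBA.ne', hBA.not_ge,
        hBC.not_gt]
    · simp [dBEFORE_of_le hBA.le, dBEFORE_of_lt hCB, dSIMULT_of_ne hBA.ne', hCB, hBA.le,
        hCB.le.trans hBA.le]
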